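/- There is no quasi-metric space on four points with all distances in {0,1,2} whose betweenness is isomorphic to the betweenness of Q(4). That is, for every quasi-metric ρ on a four-element set W with ρ x y ∈ {0,1,2} for all x, y, the betweenness B(ρ) is not isomorphic to B(Q(4)) = {(p,q,r), (r,p,q), (s,q,p), (q,p,s)}. -/

import Mathlib

/-- A quasi-metric on `V`: nonnegative, vanishing exactly on the diagonal,
and satisfying the (directed) triangle inequality. -/
def IsQuasiMetric {V : Type*} (d : V → V → ℝ) : Prop :=
  (∀ x y, 0 ≤ d x y) ∧ (∀ x y, d x y = 0 ↔ x = y) ∧ (∀ x y z, d x z ≤ d x y + d y z)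

/-- Betweenness: `y` lies between `x` and `z` (all three pairwise distinct). -/
def BtwQM {V : Type*} (d : V → V → ℝ) (x y z : V) : Prop :=
  x ≠ y ∧ y ≠ z ∧ x ≠ z ∧ d x z = d x y + d y z

/-- The line through `x` and `y`. -/
def lineQM {V : Type*} (d : V → V → ℝ) (x y : V) : Set V :=
  {z | d z y = d z x + d x y ∨ d x y = d x z + d z y ∨ d x z = d x y + d y z}

/-- The set of all lines of the space. -/
def linesQM {V : Type*} (d : V → V → ℝ) : Set (Set V) :=
  {ℓ | ∃ x y, x ≠ y ∧ ℓ = lineQM d x y}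

/-- The four points of the space `Q(4)`. -/
inductive P4 : Type
  | p | s | q | r
deriving DecidableEq

open P4

/-- The quasi-metric of the space `Q(4)`. -/
def dQ4 : P4 → P4 → ℝ
  | p, p => 0 | p, s => 1 | p, q => 1 | p, r => 3
  | s, p => 3 | s, s => 0 | s, q => 2 | s, r => 3
  | q, p => 1 | q, s => 2 | q, q => 0 | q, r => 2
  | r, p => 1 | r, s => 1 | r, q => 2 | r, r => 0

/-- The betweenness of `Q(4)`. -/
def BQ4 : Set (P4 × P4 × P4) := {(p, q, r), (r, p, q), (s, q, p), (q, p, s)}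

/-!
With all distances between distinct points in `{1, 2}`, a sum of two distances equals a third
only as `1 + 1 = 2`. The triples `(p,q,r)`, `(r,p,q)`, `(s,q,p)` of `B(Q(4))` then force
`ρ(q,r) = ρ(r,p) = ρ(s,q) = 1` and `ρ(s,p) = 2`; since `(s,q,r)` is not a triple, `ρ(s,r) = 1`,
and then `ρ(s,p) = ρ(s,r) + ρ(r,p)` makes `(s,r,p)` a triple, which it is not.
-/

theorem IsQuasiMetric.dist_mem_one_two_of_ne {V : Type*} {d : V → V → ℝ} (hd : IsQuasiMetric d)
    (hval : ∀ x y, d x y ∈ ({0, 1, 2} : Set ℝ)) {x y : V} (hxy : x ≠ y) :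
    d x y ∈ ({1, 2} : Set ℝ) := by
  rcases hval x y with h | h | h
  · exact absurd ((hd.2.1 x y).1 h) hxy
  · exact Or.inl h
  · exact Or.inr h

theorem btwQM_iff_of_dist_mem_one_two {V : Type*} {d : V → V → ℝ}
    (hd : ∀ x y, x ≠ y → d x y ∈ ({1, 2} : Set ℝ)) {x y z : V}
    (hxy : x ≠ y) (hyz : y ≠ z) (hxz : x ≠ z) :
    BtwQM d x y z ↔ d x y = 1 ∧ d y z = 1 ∧ d x z = 2 := by
  have h₁ := hd x y hxy
  have h₂ := hd y z hyz
  have h₃ := hd x z hxz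
  simp only [Set.mem_insert_iff, Set.mem_singleton_iff] at h₁ h₂ h₃
  simp only [BtwQM, hxy, hyz, hxz, ne_eq, not_false_eq_true, true_and]
  constructor
  · intro h
    rcases h₁ with h₁ | h₁ <;> rcases h₂ with h₂ | h₂ <;> rcases h₃ with h₃ | h₃ <;>
      first | exact ⟨h₁, h₂, h₃⟩ | (exfalso; linarith)
  · rintro ⟨h₁, h₂, h₃⟩
    rw [h₁, h₂, h₃]
    norm_num

theorem stmt_5_general (W : Type)
    (ρ : W → W → ℝ) (hρ : IsQuasiMetric ρ)
    (hval : ∀ x y, ρ x y ∈ ({0, 1, 2} : Set ℝ)) :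
    ¬ ∃ f : P4 ≃ W, ∀ x y z : P4,
        (x, y, z) ∈ BQ4 ↔ BtwQM ρ (f x) (f y) (f z) := by
  rintro ⟨f, hf⟩
  have hd : ∀ x y, x ≠ y → ρ x y ∈ ({1, 2} : Set ℝ) := fun _ _ ↦ hρ.dist_mem_one_two_of_ne hval
  have hB : ∀ x y z : P4, x ≠ y → y ≠ z → x ≠ z → ((x, y, z) ∈ BQ4 ↔
      ρ (f x) (f y) = 1 ∧ ρ (f y) (f z) = 1 ∧ ρ (f x) (f z) = 2) := fun x y z hxy hyz hxz ↦
    (hf x y z).trans (btwQM_iff_of_dist_mem_one_two hd (f.injective.ne hxy)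
      (f.injective.ne hyz) (f.injective.ne hxz))
  obtain ⟨-, hqr, -⟩ := (hB p q r (by decide) (by decide) (by decide)).1 (by simp [BQ4])
  obtain ⟨hrp, -, -⟩ := (hB r p q (by decide) (by decide) (by decide)).1 (by simp [BQ4])
  obtain ⟨hsq, -, hsp⟩ := (hB s q p (by decide) (by decide) (by decide)).1 (by simp [BQ4])
  have hsr : ρ (f s) (f r) = 1 := by
    have hsr₂ : ρ (f s) (f r) ≠ 2 := fun h ↦ by
      simpa [BQ4] using (hB s q r (by decide) (by decide) (by decide)).2 ⟨hsq, hqr, h⟩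
    simpa [hsr₂] using hd _ _ (f.injective.ne (show s ≠ r by decide))
  simpa [BQ4] using (hB s r p (by decide) (by decide) (by decide)).2 ⟨hsr, hrp, hsp⟩

/-- no quasi-metric space on four points with distances in `{0,1,2}`
has a betweenness isomorphic to that of `Q(4)`. -/
theorem stmt_5 (W : Type) [Fintype W] (hW : Fintype.card W = 4)
    (ρ : W → W → ℝ) (hρ : IsQuasiMetric ρ)
    (hval : ∀ x y, ρ x y ∈ ({0, 1, 2} : Set ℝ)) :
    ¬ ∃ f : P4 ≃ W, ∀ x y z : P4,
        (x, y, z) ∈ BQ4 ↔ BtwQM ρ (f x) (f y) (f z) :=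
  stmt_5_general W ρ hρ hval
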